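/- Let F ⊆ ℝ² be the attractor of an IFS {S₁, S₂} where S_j(x) = ρ O_α x + w_j with common ratio ρ ∈ (0,1), common rotation O_α ∈ SO(2) through angle α with α/π irrational, S₁(F) ∩ S₂(F) = ∅, and 0 ∈ F (w₁ = 0). Then for every θ ∈ [0, π), every r ∈ (0, ρ], and every M ∈ ℕ, there exists τ ∈ (0, r) such that the projection π_θ(F) contains points t₁ < t₂ < … < t_M with τ/2 ≤ t_{j+1} − t_j ≤ 4τ for all 1 ≤ j < M. -/

import Mathlib

/-!
Since `w 0 = 0`, the attractor is invariant under the contraction `S = ρ O_α` and under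
`x ↦ S x + w 1`; it therefore contains the fixed point `0` and every finite sum
`∑_{n ∈ s} Sⁿ (w 1)`. The projection of `Sⁿ (w 1)` is `ρⁿ R cos (n α - ψ)`.

By induction on `M` one finds exponents `D 0 < D 1 < ⋯` and a nonempty open set of phases `x` on
which all `ρ ^ D j * cos (x + D j • α)` lie in one window `(u, 2 u)`: the new term gets exponent
`0` and a phase just below `π / 2`, where `cos` is small, while the old terms are pushed down by a
large shift `e` whose phase `e • α` is chosen, by minimality of the irrational rotation, close to
the old phase minus `π / 2`. Taking `k` large with `k • α - ψ` in that open set, the partial sums of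
the projections of `S ^ (k + D j) (w 1)` are points of `π_θ(F)` with consecutive gaps in
`(τ, 2 τ)`, `τ = ρ ^ k * R * u`.
-/
open Metric Set Real

noncomputable def rot (α : ℝ) (x : EuclideanSpace ℝ (Fin 2)) : EuclideanSpace ℝ (Fin 2) :=
  (WithLp.equiv 2 (Fin 2 → ℝ)).symm
    ![x 0 * Real.cos α - x 1 * Real.sin α, x 0 * Real.sin α + x 1 * Real.cos α]

noncomputable def projDir (θ : ℝ) (x : EuclideanSpace ℝ (Fin 2)) : ℝ :=
  x 0 * Real.cos θ + x 1 * Real.sin θ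

open Filter Topology

local notation "E²" => EuclideanSpace ℝ (Fin 2)

lemma zero_mem_of_mapsTo_of_norm_le {E : Type*} [NormedAddCommGroup E] {F : Set E}
    (hF : IsClosed F) (hne : F.Nonempty) {T : E → E} (hT : MapsTo T F F) {c : ℝ} (hc0 : 0 ≤ c)
    (hc1 : c < 1) (hTc : ∀ x, ‖T x‖ ≤ c * ‖x‖) : (0 : E) ∈ F := by
  obtain ⟨x, hx⟩ := hne
  have hle : ∀ n, ‖T^[n] x‖ ≤ c ^ n * ‖x‖ := by
    intro n
    induction n with
    | zero => simp
    | succ n ih =>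
      rw [Function.iterate_succ_apply', pow_succ', mul_assoc]
      exact (hTc _).trans (mul_le_mul_of_nonneg_left ih hc0)
  have hlim : Tendsto (fun n => T^[n] x) atTop (nhds 0) := by
    refine squeeze_zero_norm hle ?_
    simpa using (tendsto_pow_atTop_nhds_zero_of_lt_one hc0 hc1).mul_const ‖x‖
  exact hF.mem_of_tendsto hlim (Eventually.of_forall fun n => hT.iterate n hx)

lemma sum_pow_apply_mem {R M : Type*} [Semiring R] [AddCommMonoid M] [Module R M]
    {F : Set M} {T : Module.End R M} {v : M} (h0 : 0 ∈ F) (hT : MapsTo T F F)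
    (hTv : MapsTo (fun x => T x + v) F F) (s : Finset ℕ) : ∑ n ∈ s, (T ^ n) v ∈ F := by
  classical
  suffices key : ∀ (L : ℕ) (p : ℕ → Prop) [DecidablePred p],
      ∑ n ∈ Finset.range L, (if p n then (T ^ n) v else 0) ∈ F by
    obtain ⟨L, hL⟩ := s.exists_nat_subset_range
    simpa [Finset.sum_ite_mem, Finset.inter_eq_right.2 hL] using key L (· ∈ s)
  intro L
  induction L with
  | zero => simpa using h0
  | succ L ih =>
    intro p _
    have hshift : ∀ n, (if p (n + 1) then (T ^ (n + 1)) v else 0)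
        = T (if p (n + 1) then (T ^ n) v else 0) := by
      intro n; split_ifs <;> simp [pow_succ']
    rw [Finset.sum_range_succ', Finset.sum_congr rfl fun n _ => hshift n, ← map_sum]
    have hmem := ih (fun n => p (n + 1))
    by_cases hp : p 0
    · simpa [hp] using hTv hmem
    · simpa [hp] using hT hmem

lemma exists_strictMono_fin_of_gaps {A : Set ℝ} {τ : ℝ} {M : ℕ} {g : ℕ → ℝ}
    (hg : ∀ j < M, g j ∈ Ioo τ (2 * τ)) (hA : ∀ i < M, ∑ j ∈ Finset.range i, g j ∈ A) :
    ∃ ts : Fin M → ℝ, StrictMono ts ∧ (∀ j, ts j ∈ A) ∧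
      ∀ (i : Fin M) (h : (i : ℕ) + 1 < M),
        τ / 2 ≤ ts ⟨(i : ℕ) + 1, h⟩ - ts i ∧ ts ⟨(i : ℕ) + 1, h⟩ - ts i ≤ 4 * τ := by
  refine ⟨fun i => ∑ j ∈ Finset.range i, g j, fun a b hab => ?_, fun i => hA i i.isLt,
    fun i h => ?_⟩
  · rw [← sub_pos, ← Finset.sum_Ico_eq_sub _ hab.le]
    refine Finset.sum_pos (fun j hj => ?_) (Finset.nonempty_Ico.2 hab)
    have := hg j ((Finset.mem_Ico.1 hj).2.trans b.isLt)
    linarith [this.1, this.2]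
  · have := hg i i.isLt
    simp only [Finset.sum_range_succ, add_sub_cancel_left]
    constructor <;> linarith [this.1, this.2]

instance : CompactSpace Real.Angle :=
  haveI : Fact (0 < 2 * π) := ⟨two_pi_pos⟩
  inferInstanceAs (CompactSpace (AddCircle (2 * π)))

lemma Real.Angle.mapClusterPt_nsmul_coe {α : ℝ} (hα : Irrational (α / π)) (x : Real.Angle) :
    MapClusterPt x atTop (fun n : ℕ => n • (α : Real.Angle)) := by
  have hdense : DenseRange (fun n : ℤ => n • (α : Real.Angle)) := by
    refine AddCircle.denseRange_zsmul_coe_iff.2 ?_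
    simpa [div_div, mul_comm] using hα.div_natCast two_ne_zero
  exact (mapClusterPt_atTop_nsmul_tfae x _).out 0 3 |>.2 (hdense.closure_eq ▸ mem_univ x)

lemma Real.Angle.exists_nsmul_sub_mem {α : ℝ} (hα : Irrational (α / π)) {U : Set Real.Angle}
    (hUo : IsOpen U) (hU : U.Nonempty) (ψ : Real.Angle) (N : ℕ) :
    ∃ k ≥ N, k • (α : Real.Angle) - ψ ∈ U := by
  obtain ⟨x, hx⟩ := hU
  have hnhds : {y | y - ψ ∈ U} ∈ 𝓝 (x + ψ) :=
    (continuous_sub_right ψ).continuousAt.preimage_mem_nhds (hUo.mem_nhds (by simpa using hx))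
  obtain ⟨k, hkU, hkN⟩ := (((Real.Angle.mapClusterPt_nsmul_coe hα (x + ψ)).frequently
    hnhds).and_eventually (eventually_ge_atTop N)).exists
  exact ⟨k, hkN, hkU⟩

lemma Real.Angle.exists_nhds_add_coe_sub_mem {U : Set Real.Angle} {x : Real.Angle}
    (hU : U ∈ 𝓝 x) (b : ℝ) :
    ∃ A ∈ 𝓝 (x - b), ∃ δ > 0, ∀ a ∈ A, ∀ y : ℝ, |y| < δ → a + ((b - y : ℝ) : Real.Angle) ∈ U := by
  have hcont : Continuous fun p : Real.Angle × ℝ => p.1 + ((b - p.2 : ℝ) : Real.Angle) :=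
    continuous_fst.add (Real.Angle.continuous_coe.comp (continuous_const.sub continuous_snd))
  have hmem := hcont.continuousAt.preimage_mem_nhds (x := (x - b, 0)) (by simpa using hU)
  obtain ⟨A, hA, B, hB, hAB⟩ := mem_nhds_prod_iff.1 hmem
  obtain ⟨δ, hδ, hδB⟩ := Metric.mem_nhds_iff.1 hB
  exact ⟨A, hA, δ, hδ, fun a ha y hy =>
    hAB (mk_mem_prod ha (hδB (by simpa [Real.dist_eq] using hy)))⟩

lemma exists_cos_pi_div_two_sub_eq {ε : ℝ} (hε : 0 < ε) :
    ∃ T > 0, ∀ t ∈ Ioo 0 T, ∃ y ∈ Ioo 0 ε, Real.cos (π / 2 - y) = t := by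
  set ε' := min ε 1
  have hε'π : ε' < π := (min_le_right _ _).trans_lt (by linarith [pi_gt_three])
  have hε' : 0 < ε' := lt_min hε one_pos
  refine ⟨Real.sin ε', Real.sin_pos_of_pos_of_lt_pi hε' hε'π, fun t ⟨ht0, htT⟩ =>
    ⟨Real.arcsin t, ⟨Real.arcsin_pos.2 ht0, ?_⟩, ?_⟩⟩
  · calc Real.arcsin t < Real.arcsin (Real.sin ε') :=
          Real.arcsin_lt_arcsin (by linarith) htT (Real.sin_le_one ε')
      _ = ε' := Real.arcsin_sin (by linarith) (by linarith [min_le_right ε 1, pi_gt_three])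
      _ ≤ ε := min_le_left _ _
  · rw [Real.cos_pi_div_two_sub, Real.sin_arcsin (by linarith)
      (htT.le.trans (Real.sin_le_one ε'))]

lemma exists_phase_window {ρ : ℝ} (hρ0 : 0 < ρ) (hρ1 : ρ < 1) {α : Real.Angle}
    (hα : ∀ x, MapClusterPt x atTop (fun n : ℕ => n • α)) {c : ℝ} (hc : 1 < c) (m : ℕ) :
    ∃ D : ℕ → ℕ, StrictMono D ∧ ∃ u > 0, ∃ U : Set Real.Angle, IsOpen U ∧ U.Nonempty ∧
      ∀ x ∈ U, ∀ j < m, ρ ^ D j * Real.Angle.cos (x + D j • α) ∈ Ioo u (c * u) := by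
  induction m with
  | zero => exact ⟨id, strictMono_id, 1, one_pos, univ, isOpen_univ, univ_nonempty, by simp⟩
  | succ m ih =>
    obtain ⟨D, hD, u, hu, U, hUo, ⟨x₀, hx₀⟩, hU⟩ := ih
    obtain ⟨A, hA, δ, hδ, hAδ⟩ := Real.Angle.exists_nhds_add_coe_sub_mem (hUo.mem_nhds hx₀) (π / 2)
    obtain ⟨T, hT, hTcos⟩ := exists_cos_pi_div_two_sub_eq hδ
    set κ := u * ((1 + c) / 2)
    have hκ : 0 < κ := by positivity
    obtain ⟨N, hN⟩ := exists_pow_lt_of_lt_one (div_pos hT hκ) hρ1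
    obtain ⟨e, heA, heN⟩ := (((hα _).frequently (p := (· ∈ A)) hA).and_eventually
      (eventually_ge_atTop (max N 1))).exists
    -- the new index `0` gets a phase `π / 2 - y` at which `cos` is the midpoint `ρ ^ e * κ`
    -- of the new window, while the old indices are shifted by `e`
    have hρe : ρ ^ e * κ < T := by
      have := pow_le_pow_of_le_one hρ0.le hρ1.le ((le_max_left N 1).trans heN)
      calc ρ ^ e * κ ≤ ρ ^ N * κ := mul_le_mul_of_nonneg_right this hκ.le
        _ < T := (lt_div_iff₀ hκ).1 hN
    obtain ⟨y, ⟨hy0, hyδ⟩, hcosy⟩ := hTcos _ ⟨by positivity, hρe⟩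
    refine ⟨fun | 0 => 0 | i + 1 => e + D i, ?_, ρ ^ e * u, by positivity,
      {x | Real.Angle.cos x ∈ Ioo (ρ ^ e * u) (c * (ρ ^ e * u))} ∩ {x | x + e • α ∈ U}, ?_,
      ⟨(π / 2 - y : ℝ), ?_, ?_⟩, ?_⟩
    · refine strictMono_nat_of_lt_succ fun i => ?_
      cases i with
      | zero => show 0 < e + D 0; omega
      | succ i => exact Nat.add_lt_add_left (hD i.lt_succ_self) e
    · exact (isOpen_Ioo.preimage Real.Angle.continuous_cos).inter
        (hUo.preimage (continuous_id.add continuous_const))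
    · rw [mem_ofPred_eq, Real.Angle.cos_coe, hcosy]
      have hρeu : 0 < ρ ^ e * u := by positivity
      constructor <;> simp only [κ] <;> nlinarith
    · rw [mem_ofPred_eq, add_comm]
      exact hAδ _ heA y (by rwa [abs_of_pos hy0])
    · rintro x ⟨hxcos, hxU⟩ j hj
      cases j with
      | zero => simpa using hxcos
      | succ i =>
        have hi := hU _ hxU i (by omega)
        have hρe := pow_pos hρ0 e
        show ρ ^ (e + D i) * Real.Angle.cos (x + (e + D i) • α) ∈ _
        rw [pow_add, add_smul, ← add_assoc, mul_assoc]
        exact ⟨by nlinarith [hi.1], by nlinarith [hi.2]⟩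

@[simp] lemma rot_apply_zero (a : ℝ) (x : E²) :
    rot a x 0 = x 0 * Real.cos a - x 1 * Real.sin a := by
  simp [rot]

@[simp] lemma rot_apply_one (a : ℝ) (x : E²) :
    rot a x 1 = x 0 * Real.sin a + x 1 * Real.cos a := by
  simp [rot]

lemma rot_add (a b : ℝ) (x : E²) : rot (a + b) x = rot a (rot b x) := by
  ext i; fin_cases i <;> simp [Real.cos_add, Real.sin_add] <;> ring

@[simp] lemma rot_zero (x : E²) : rot 0 x = x := by
  ext i; fin_cases i <;> simp

lemma norm_rot (a : ℝ) (x : E²) : ‖rot a x‖ = ‖x‖ := by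
  simp only [EuclideanSpace.norm_eq, Fin.sum_univ_two, rot_apply_zero, rot_apply_one,
    Real.norm_eq_abs, sq_abs]
  congr 1
  linear_combination (x 0 ^ 2 + x 1 ^ 2) * Real.sin_sq_add_cos_sq a

noncomputable def rotₗ (a : ℝ) : E² →ₗ[ℝ] E² where
  toFun := rot a
  map_add' x y := by ext i; fin_cases i <;> simp <;> ring
  map_smul' c x := by ext i; fin_cases i <;> simp <;> ring

@[simp] lemma rotₗ_apply (a : ℝ) (x : E²) : rotₗ a x = rot a x := rfl

lemma smul_rotₗ_pow_apply (ρ a : ℝ) (n : ℕ) (x : E²) :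
    ((ρ • rotₗ a) ^ n) x = ρ ^ n • rot (n * a) x := by
  induction n with
  | zero => simp
  | succ n ih =>
    rw [pow_succ', Module.End.mul_apply, ih, LinearMap.smul_apply, rotₗ_apply, ← rotₗ_apply,
      map_smul, rotₗ_apply, ← rot_add, smul_smul, ← pow_succ']
    push_cast; ring_nf

noncomputable def projDirₗ (θ : ℝ) : E² →ₗ[ℝ] ℝ where
  toFun := projDir θ
  map_add' x y := by simp [projDir]; ring
  map_smul' c x := by simp [projDir]; ring

@[simp] lemma projDirₗ_apply (θ : ℝ) (x : E²) : projDirₗ θ x = projDir θ x := rfl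

lemma exists_projDir_rot_eq_mul_cos {v : E²} (hv : v ≠ 0) (θ : ℝ) :
    ∃ R > 0, ∃ ψ : ℝ, ∀ b, projDir θ (rot b v) = R * Real.cos (b - ψ) := by
  set z : ℂ := ⟨v 0, v 1⟩
  have hz : z ≠ 0 := by
    refine fun h => hv ?_
    ext i; fin_cases i
    · exact congrArg Complex.re h
    · exact congrArg Complex.im h
  have hre : ‖z‖ * Real.cos z.arg = v 0 := Complex.norm_mul_cos_arg z
  have him : ‖z‖ * Real.sin z.arg = v 1 := Complex.norm_mul_sin_arg z
  refine ⟨‖z‖, norm_pos_iff.2 hz, θ - z.arg, fun b => ?_⟩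
  simp only [projDir, rot_apply_zero, rot_apply_one, ← hre, ← him, sub_sub_eq_add_sub,
    Real.cos_add, Real.cos_sub, Real.sin_add]
  ring

lemma projDir_smul_rotₗ_pow_apply {v : E²} {θ R ψ : ℝ}
    (hRψ : ∀ b, projDir θ (rot b v) = R * Real.cos (b - ψ)) (ρ α : ℝ) (n : ℕ) :
    projDir θ (((ρ • rotₗ α) ^ n) v) = ρ ^ n * R * Real.Angle.cos (n • (α : Real.Angle) - ψ) := by
  rw [smul_rotₗ_pow_apply, ← projDirₗ_apply, map_smul, projDirₗ_apply, hRψ,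
    ← Real.Angle.cos_coe, Real.Angle.coe_sub, ← nsmul_eq_mul, Real.Angle.coe_nsmul, smul_eq_mul,
    mul_assoc]

lemma exists_projDir_smul_rotₗ_pow_mem_Ioo {ρ α : ℝ} (hρ0 : 0 < ρ) (hρ1 : ρ < 1)
    (hα : Irrational (α / π)) {v : E²} (hv : v ≠ 0) (θ : ℝ) {r : ℝ} (hr : 0 < r) (M : ℕ) :
    ∃ τ ∈ Ioo 0 r, ∃ n : ℕ → ℕ, StrictMono n ∧
      ∀ j < M, projDir θ (((ρ • rotₗ α) ^ n j) v) ∈ Ioo τ (2 * τ) := by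
  obtain ⟨R, hR, ψ, hRψ⟩ := exists_projDir_rot_eq_mul_cos hv θ
  obtain ⟨D, hD, u, hu, U, hUo, hUne, hU⟩ :=
    exists_phase_window hρ0 hρ1 (Real.Angle.mapClusterPt_nsmul_coe hα) one_lt_two M
  obtain ⟨N, hN⟩ := exists_pow_lt_of_lt_one (div_pos hr (mul_pos hR hu)) hρ1
  obtain ⟨k, hkN, hkU⟩ := Real.Angle.exists_nsmul_sub_mem hα hUo hUne ψ N
  have hτr : ρ ^ k * R * u < r := by
    have := pow_le_pow_of_le_one hρ0.le hρ1.le hkN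
    calc ρ ^ k * R * u = ρ ^ k * (R * u) := mul_assoc _ _ _
      _ ≤ ρ ^ N * (R * u) := by gcongr
      _ < r := (lt_div_iff₀ (mul_pos hR hu)).1 hN
  refine ⟨ρ ^ k * R * u, ⟨by positivity, hτr⟩, fun j => k + D j,
    fun a b hab => Nat.add_lt_add_left (hD hab) k, fun j hj => ?_⟩
  obtain ⟨hlo, hhi⟩ := hU _ hkU j hj
  have hkR : 0 < ρ ^ k * R := by positivity
  rw [projDir_smul_rotₗ_pow_apply hRψ, pow_add, add_nsmul, add_sub_right_comm,
    show ∀ a b c : ℝ, a * b * R * c = a * R * (b * c) from fun _ _ _ => by ring]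
  exact ⟨mul_lt_mul_of_pos_left hlo hkR, by nlinarith [mul_lt_mul_of_pos_left hhi hkR]⟩

lemma sum_smul_rotₗ_pow_apply_mem {ρ α : ℝ} (hρ0 : 0 < ρ) (hρ1 : ρ < 1)
    {w : Fin 2 → E²} (hw0 : w 0 = 0) {F : Set E²} (hFne : F.Nonempty) (hFc : IsCompact F)
    (hattr : F = (fun x => ρ • rot α x + w 0) '' F ∪ (fun x => ρ • rot α x + w 1) '' F)
    (s : Finset ℕ) : ∑ n ∈ s, ((ρ • rotₗ α) ^ n) (w 1) ∈ F := by
  have hS : MapsTo (ρ • rotₗ α) F F := fun x hx => by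
    rw [hattr]; exact Or.inl ⟨x, hx, by simp [hw0]⟩
  have hSw : MapsTo (fun x => (ρ • rotₗ α) x + w 1) F F := fun x hx => by
    rw [hattr]; exact Or.inr ⟨x, hx, by simp⟩
  have h0 : (0 : E²) ∈ F := zero_mem_of_mapsTo_of_norm_le hFc.isClosed hFne hS hρ0.le hρ1
    fun x => by simp [norm_smul, norm_rot, abs_of_pos hρ0]
  exact sum_pow_apply_mem h0 hS hSw s

/-- For the attractor of two equal-ratio irrational-rotation similarities with disjoint
images, every projection contains, at all scales, `M` roughly `2τ`-spaced points. -/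
theorem stmt_12 (ρ α : ℝ) (hρ : ρ ∈ Set.Ioo (0 : ℝ) 1) (hα : Irrational (α / Real.pi))
    (w : Fin 2 → EuclideanSpace ℝ (Fin 2)) (hw1 : w 0 = 0)
    (F : Set (EuclideanSpace ℝ (Fin 2))) (hFne : F.Nonempty) (hFc : IsCompact F)
    (hattr : F = (fun x => ρ • rot α x + w 0) '' F ∪ (fun x => ρ • rot α x + w 1) '' F)
    (hdisj : ((fun x => ρ • rot α x + w 0) '' F) ∩ ((fun x => ρ • rot α x + w 1) '' F) = ∅) :
    ∀ θ ∈ Set.Ico (0 : ℝ) Real.pi, ∀ r ∈ Set.Ioc (0 : ℝ) ρ, ∀ M : ℕ,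
      ∃ τ ∈ Set.Ioo (0 : ℝ) r, ∃ ts : Fin M → ℝ,
        StrictMono ts ∧ (∀ j, ts j ∈ projDir θ '' F) ∧
        ∀ (i : Fin M) (h : (i : ℕ) + 1 < M),
          τ / 2 ≤ ts ⟨(i : ℕ) + 1, h⟩ - ts i ∧ ts ⟨(i : ℕ) + 1, h⟩ - ts i ≤ 4 * τ := by
  obtain ⟨hρ0, hρ1⟩ := hρ
  intro θ _ r hr M
  have hw : w 1 ≠ 0 := fun h => by
    rw [hw1, ← h, inter_self] at hdisj
    exact (hFne.image _).ne_empty hdisj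
  obtain ⟨τ, hτ, n, hn, hgap⟩ :=
    exists_projDir_smul_rotₗ_pow_mem_Ioo hρ0 hρ1 hα hw θ hr.1 M
  have hpts : ∀ i, ∑ j ∈ Finset.range i, ((ρ • rotₗ α) ^ n j) (w 1) ∈ F := fun i => by
    rw [← Finset.sum_image (g := n) (f := fun m => ((ρ • rotₗ α) ^ m) (w 1))
      fun a _ b _ hab => hn.injective hab]
    exact sum_smul_rotₗ_pow_apply_mem hρ0 hρ1 hw1 hFne hFc hattr _
  refine ⟨τ, hτ, exists_strictMono_fin_of_gaps hgap fun i _ => ⟨_, hpts i, ?_⟩⟩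
  simp only [← projDirₗ_apply, map_sum]
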